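/- Assume (A1), (A2), (A3). Then lim_{B→∞} sup_{ℓ≥1} ∫_{Bℓ}^∞ y e^y P(M_ℓ > y) dy = 0; in fact, for every B > 0, sup_{ℓ≥1} ∫_{Bℓ}^∞ y e^y P(M_ℓ > y) dy ≤ σ²/B. -/

import Mathlib

open MeasureTheory ProbabilityTheory Filter Set Asymptotics
open scoped ENNReal NNReal Topology Classical

noncomputable section

namespace BRW

/-- `e^x` for `x ∈ ℝ ∪ {−∞}`, with `e^{−∞} := 0`. -/
def expR (x : EReal) : ℝ := if x = ⊥ then 0 else Real.exp x.toReal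

/-- `x e^x` extended by `0` at `−∞`. -/
def xexpR (x : EReal) : ℝ := if x = ⊥ then 0 else x.toReal * Real.exp x.toReal

/-- `x² e^x` extended by `0` at `−∞`. -/
def x2expR (x : EReal) : ℝ := if x = ⊥ then 0 else x.toReal ^ 2 * Real.exp x.toReal

/-- `log₊ x = log (max x 1)`. -/
def logPlus (x : ℝ) : ℝ := Real.log (max x 1)

variable {Ω : Type*} [MeasurableSpace Ω]

/-- The position `V(u)` of the particle `u = (u⁽¹⁾, …, u⁽ⁿ⁾)`:
`V(u) = ∑_{i=0}^{|u|−1} ℓ^{(u_i)}_{u⁽ⁱ⁺¹⁾}`, where `u_i` is the prefix of `u` of length `i`.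
Dead particles have position `−∞ = ⊥`. -/
def pos (L : List ℕ → Ω → ℕ → EReal) (u : List ℕ) (ω : Ω) : EReal :=
  ∑ i ∈ Finset.range u.length, L (u.take i) ω (u.getD i 0)

/-- `M_n`, the maximal position at generation `n` (dead particles, having position `⊥`,
do not contribute; `sup ∅ = ⊥ = −∞`). -/
def maxPos (L : List ℕ → Ω → ℕ → EReal) (n : ℕ) (ω : Ω) : EReal :=
  ⨆ u : {u : List ℕ // u.length = n}, pos L u.1 ω

/-- `m_n = −(3/2) log n`. -/
def mshift (n : ℕ) : ℝ := -(3 / 2 : ℝ) * Real.log (n : ℝ)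

/-- `f_n(k) = m_n − m_{n−k+1}`. -/
def fbar (n k : ℕ) : ℝ := mshift n - mshift (n - k + 1)

/-- Structural assumptions defining a branching random walk: the point processes
`(ℒ^{(u)})_{u ∈ 𝕋}` are i.i.d. copies of a point process, modeled as random non-increasing
sequences with values in `ℝ ∪ {−∞}` (never `+∞`). -/
structure IsBRW (L : List ℕ → Ω → ℕ → EReal) (P : Measure Ω) : Prop where
  indep : iIndepFun L P
  ident : ∀ u : List ℕ, IdentDistrib (L u) (L []) P P
  ne_top : ∀ u ω i, L u ω i ≠ ⊤
  anti : ∀ u ω, Antitone (L u ω)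

/-- (A1) supercriticality: `E[∑_{|u|=1} 1] ∈ (1, ∞]`. -/
def A1 (L : List ℕ → Ω → ℕ → EReal) (P : Measure Ω) : Prop :=
  1 < ∫⁻ ω, (∑' i : ℕ, if L [] ω i = ⊥ then 0 else 1) ∂P

/-- (A2) the boundary case: `E[∑_{|u|=1} e^{V(u)}] = 1` and `E[∑_{|u|=1} V(u) e^{V(u)}] = 0`. -/
def A2 (L : List ℕ → Ω → ℕ → EReal) (P : Measure Ω) : Prop :=
  (∫⁻ ω, (∑' i : ℕ, ENNReal.ofReal (expR (L [] ω i))) ∂P) = 1 ∧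
  (∫ ω, (∑' i : ℕ, xexpR (L [] ω i)) ∂P) = 0

/-- `E[∑_{|u|=1} V(u)² e^{V(u)}]` as an extended nonnegative real. -/
def sigma2Int (L : List ℕ → Ω → ℕ → EReal) (P : Measure Ω) : ℝ≥0∞ :=
  ∫⁻ ω, (∑' i : ℕ, ENNReal.ofReal (x2expR (L [] ω i))) ∂P

/-- (A3) finite variance: `σ² = E[∑_{|u|=1} V(u)² e^{V(u)}] < ∞`. -/
def A3 (L : List ℕ → Ω → ℕ → EReal) (P : Measure Ω) : Prop := sigma2Int L P < ⊤

/-- `σ²`. -/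
def sigma2 (L : List ℕ → Ω → ℕ → EReal) (P : Measure Ω) : ℝ := (sigma2Int L P).toReal

/-- `σ`. -/
def sigma (L : List ℕ → Ω → ℕ → EReal) (P : Measure Ω) : ℝ := Real.sqrt (sigma2 L P)

/-- `X = ∑_{|u|=1} e^{V(u)}`. -/
def Xsum (L : List ℕ → Ω → ℕ → EReal) (ω : Ω) : ℝ := ∑' i : ℕ, expR (L [] ω i)

/-- `X̃ = ∑_{|u|=1} max(−V(u),0) e^{V(u)}`. -/
def Xtilde (L : List ℕ → Ω → ℕ → EReal) (ω : Ω) : ℝ :=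
  ∑' i : ℕ, max (-(L [] ω i).toReal) 0 * expR (L [] ω i)

/-- (A4): `E[X (log₊ X)²] < ∞` and `E[X̃ log₊ X̃] < ∞`. -/
def A4 (L : List ℕ → Ω → ℕ → EReal) (P : Measure Ω) : Prop :=
  (∫⁻ ω, ENNReal.ofReal (Xsum L ω * logPlus (Xsum L ω) ^ 2) ∂P < ⊤) ∧
  (∫⁻ ω, ENNReal.ofReal (Xtilde L ω * logPlus (Xtilde L ω)) ∂P < ⊤)

/-- The support of the point process is (a.s.) contained in `a + hℤ`. -/
def LatticeSupp (L : List ℕ → Ω → ℕ → EReal) (P : Measure Ω) (h a : ℝ) : Prop :=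
  ∀ᵐ ω ∂P, ∀ i : ℕ, L [] ω i = ⊥ ∨ ∃ k : ℤ, L [] ω i = ((a + k * h : ℝ) : EReal)

/-- The branching random walk is `(h,a)`-lattice: `0 ≤ a < h` and `h` is the largest real
such that the support of `ℒ` is contained in `a + hℤ`. -/
def IsLattice (L : List ℕ → Ω → ℕ → EReal) (P : Measure Ω) (h a : ℝ) : Prop :=
  0 ≤ a ∧ a < h ∧ LatticeSupp L P h a ∧
    ∀ h' a' : ℝ, 0 ≤ a' → a' < h' → LatticeSupp L P h' a' → h' ≤ h

/-- The branching random walk is non-lattice: no such pair `(h,a)` exists. -/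
def NonLattice (L : List ℕ → Ω → ℕ → EReal) (P : Measure Ω) : Prop :=
  ¬ ∃ h a : ℝ, IsLattice L P h a

/-- `∫_0^∞ y e^y P(M_ℓ > y) dy`. -/
def tailI (L : List ℕ → Ω → ℕ → EReal) (P : Measure Ω) (ℓ : ℕ) : ℝ≥0∞ :=
  ∫⁻ y in Set.Ioi (0 : ℝ),
    ENNReal.ofReal (y * Real.exp y) * P {ω | (y : EReal) < maxPos L ℓ ω}

/-!
By the union bound, `P(M_ℓ > y) ≤ ∑_{|u|=ℓ} P(V(u) > y)`. For one particle, Tonelli and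
`c ∫_c^x y e^y dy ≤ x² e^x` (for `0 ≤ c`) bound `c ∫_c^∞ y e^y P(V(u) > y) dy` by
`E[V(u)² e^{V(u)}]`. The many-to-one identities `∑_{|u|=n} E[e^{V(u)}] = 1` and
`∑_{|u|=n} E[V(u)² e^{V(u)}] = n σ²` follow by induction on `n`, expanding
`(V(u) + ℓ_j)² = V(u)² + 2 V(u) ℓ_j + ℓ_j²` over the children `uj` of `u`: since `V(u)` is
independent of the point process at `u`, the cross term has mean
`2 E[V(u) e^{V(u)}] E[∑_j ℓ_j e^{ℓ_j}] = 0`. Taking `c = Bℓ` gives the bound `ℓσ²/(Bℓ) = σ²/B`.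
-/

section ExtendedExp

@[simp] lemma expR_bot : expR ⊥ = 0 := if_pos rfl

@[simp] lemma expR_coe (t : ℝ) : expR t = Real.exp t := by simp [expR]

@[simp] lemma xexpR_bot : xexpR ⊥ = 0 := if_pos rfl

@[simp] lemma xexpR_coe (t : ℝ) : xexpR t = t * Real.exp t := by simp [xexpR]

@[simp] lemma x2expR_bot : x2expR ⊥ = 0 := if_pos rfl

@[simp] lemma x2expR_coe (t : ℝ) : x2expR t = t ^ 2 * Real.exp t := by simp [x2expR]

lemma expR_nonneg (x : EReal) : 0 ≤ expR x := by
  unfold expR; split_ifs <;> positivity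

lemma x2expR_nonneg (x : EReal) : 0 ≤ x2expR x := by
  unfold x2expR; split_ifs <;> positivity

@[fun_prop]
lemma measurable_expR : Measurable expR :=
  Measurable.ite (measurableSet_singleton ⊥) measurable_const
    (Real.measurable_exp.comp measurable_ereal_toReal)

@[fun_prop]
lemma measurable_xexpR : Measurable xexpR :=
  Measurable.ite (measurableSet_singleton ⊥) measurable_const
    (measurable_ereal_toReal.mul (Real.measurable_exp.comp measurable_ereal_toReal))

@[fun_prop]
lemma measurable_x2expR : Measurable x2expR :=
  Measurable.ite (measurableSet_singleton ⊥) measurable_const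
    ((measurable_ereal_toReal.pow_const 2).mul (Real.measurable_exp.comp measurable_ereal_toReal))

lemma enorm_xexpR_le (x : EReal) :
    ‖xexpR x‖ₑ ≤ ENNReal.ofReal (x2expR x) + ENNReal.ofReal (expR x) := by
  rw [Real.enorm_eq_ofReal_abs, ← ENNReal.ofReal_add (x2expR_nonneg x) (expR_nonneg x)]
  refine ENNReal.ofReal_le_ofReal ?_
  induction x using EReal.rec with
  | bot => simp
  | top => simp [xexpR, x2expR, expR]
  | coe t =>
    simp only [xexpR_coe, x2expR_coe, expR_coe, abs_mul, abs_of_pos (Real.exp_pos t)]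
    nlinarith [sq_nonneg (|t| - 1), Real.exp_pos t, sq_abs t]

lemma expR_add {a b : EReal} (ha : a ≠ ⊤) (hb : b ≠ ⊤) :
    expR (a + b) = expR a * expR b := by
  induction a using EReal.rec <;> induction b using EReal.rec <;>
    simp_all [← EReal.coe_add, Real.exp_add]

lemma x2expR_add {a b : EReal} (ha : a ≠ ⊤) (hb : b ≠ ⊤) :
    x2expR (a + b) = x2expR a * expR b + expR a * x2expR b + 2 * (xexpR a * xexpR b) := by
  induction a using EReal.rec <;> induction b using EReal.rec <;>
    simp_all [← EReal.coe_add, Real.exp_add]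
  ring

lemma ofReal_add_ofReal_neg {p q t : ℝ} (hp : 0 ≤ p) (hq : 0 ≤ q) (h : p = q + t) :
    ENNReal.ofReal p + ENNReal.ofReal (-t) = ENNReal.ofReal q + ENNReal.ofReal t := by
  rcases le_total 0 t with ht | ht
  · rw [ENNReal.ofReal_of_nonpos (neg_nonpos.2 ht), add_zero, h, ENNReal.ofReal_add hq ht]
  · rw [ENNReal.ofReal_of_nonpos ht, add_zero, show q = p + -t by linarith,
      ENNReal.ofReal_add hp (neg_nonneg.2 ht)]

/-- The cross term `2 a e^a b e^b` of `(a + b)² e^{a+b}` may be negative, so its negative part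
is moved to the left-hand side. -/
lemma ofReal_x2expR_add {a b : EReal} (ha : a ≠ ⊤) (hb : b ≠ ⊤) :
    ENNReal.ofReal (x2expR (a + b)) + 2 * ENNReal.ofReal (-(xexpR a * xexpR b))
      = ENNReal.ofReal (x2expR a) * ENNReal.ofReal (expR b)
        + ENNReal.ofReal (expR a) * ENNReal.ofReal (x2expR b)
        + 2 * ENNReal.ofReal (xexpR a * xexpR b) := by
  have h := ofReal_add_ofReal_neg (x2expR_nonneg _)
    (add_nonneg (mul_nonneg (x2expR_nonneg a) (expR_nonneg b))
      (mul_nonneg (expR_nonneg a) (x2expR_nonneg b))) (x2expR_add ha hb)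
  rwa [← mul_neg, ENNReal.ofReal_mul zero_le_two, ENNReal.ofReal_mul zero_le_two,
    ENNReal.ofReal_ofNat, ENNReal.ofReal_add (mul_nonneg (x2expR_nonneg a) (expR_nonneg b))
      (mul_nonneg (expR_nonneg a) (x2expR_nonneg b)),
    ENNReal.ofReal_mul (x2expR_nonneg a), ENNReal.ofReal_mul (expR_nonneg a)] at h

end ExtendedExp

section Positions

variable {Ω : Type*} {L : List ℕ → Ω → ℕ → EReal}

@[simp] lemma pos_nil (ω : Ω) : pos L [] ω = 0 := by simp [pos]

lemma pos_append (u : List ℕ) (j : ℕ) (ω : Ω) : pos L (u ++ [j]) ω = pos L u ω + L u ω j := by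
  unfold pos
  rw [List.length_append, List.length_singleton, Finset.sum_range_succ]
  congr 1
  · refine Finset.sum_congr rfl fun i hi => ?_
    have hi : i < u.length := Finset.mem_range.1 hi
    simp [List.take_append_of_le_length hi.le, List.getD, List.getElem?_append_left hi]
  · simp [List.getD]

lemma pos_ne_top (hL : ∀ u ω i, L u ω i ≠ ⊤) (u : List ℕ) (ω : Ω) : pos L u ω ≠ ⊤ := by
  unfold pos
  induction u.length with
  | zero => simp
  | succ n ih => rw [Finset.sum_range_succ]; exact (EReal.add_lt_top ih (hL _ _ _)).ne

lemma aemeasurable_pos [MeasurableSpace Ω] {P : Measure Ω} (hL : ∀ u, AEMeasurable (L u) P)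
    (u : List ℕ) : AEMeasurable (pos L u) P :=
  Finset.aemeasurable_fun_sum _ fun _ _ => (measurable_pi_apply _).comp_aemeasurable (hL _)

end Positions

section Generations

def appendEquiv (n : ℕ) :
    {u : List ℕ // u.length = n} × ℕ ≃ {u : List ℕ // u.length = n + 1} where
  toFun p := ⟨p.1.1 ++ [p.2], by simp [p.1.2]⟩
  invFun u := (⟨u.1.dropLast, by simp [u.2]⟩, u.1.getLastD 0)
  left_inv p := by simp
  right_inv u := by
    obtain ⟨u, hu⟩ := u
    have hne : u ≠ [] := List.ne_nil_of_length_eq_add_one hu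
    simp [List.getLastD_eq_getLast?, List.getLast?_eq_some_getLast hne,
      List.dropLast_append_getLast]

lemma tsum_length_zero (F : List ℕ → ℝ≥0∞) :
    ∑' u : {u : List ℕ // u.length = 0}, F u = F [] :=
  tsum_eq_single (⟨[], rfl⟩ : {u : List ℕ // u.length = 0}) fun u hu =>
    absurd (Subtype.ext (List.length_eq_zero_iff.1 u.2)) hu

lemma tsum_length_succ (F : List ℕ → ℝ≥0∞) (n : ℕ) :
    ∑' u : {u : List ℕ // u.length = n + 1}, F u
      = ∑' u : {u : List ℕ // u.length = n}, ∑' j, F (u.1 ++ [j]) := by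
  rw [← (appendEquiv n).tsum_eq (fun u => F u.1), ← ENNReal.tsum_prod]
  rfl

end Generations

lemma tsum_lintegral_ofReal_eq_tsum_lintegral_ofReal_neg {α : Type*} [MeasurableSpace α]
    {μ : Measure α} {g : ℕ → α → ℝ} (hg : ∀ j, AEStronglyMeasurable (g j) μ)
    (hfin : ∑' j, ∫⁻ a, ‖g j a‖ₑ ∂μ ≠ ⊤) (hsum : ∑' j, ∫ a, g j a ∂μ = 0) :
    ∑' j, ∫⁻ a, ENNReal.ofReal (g j a) ∂μ = ∑' j, ∫⁻ a, ENNReal.ofReal (-g j a) ∂μ := by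
  have hpos : ∑' j, ∫⁻ a, ENNReal.ofReal (g j a) ∂μ ≠ ⊤ :=
    ne_top_of_le_ne_top hfin <| ENNReal.tsum_le_tsum fun j =>
      lintegral_mono fun a => Real.ofReal_le_enorm _
  have hneg : ∑' j, ∫⁻ a, ENNReal.ofReal (-g j a) ∂μ ≠ ⊤ :=
    ne_top_of_le_ne_top hfin <| ENNReal.tsum_le_tsum fun j =>
      lintegral_mono fun a => (Real.ofReal_le_enorm _).trans_eq (enorm_neg _)
  have hint : ∀ j, Integrable (g j) μ := fun j =>
    ⟨hg j, (ne_top_of_le_ne_top hfin (ENNReal.le_tsum j)).lt_top⟩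
  rw [← ENNReal.toReal_eq_toReal_iff' hpos hneg, ← sub_eq_zero,
    ENNReal.tsum_toReal_eq fun j => ne_top_of_le_ne_top hpos (ENNReal.le_tsum j),
    ENNReal.tsum_toReal_eq fun j => ne_top_of_le_ne_top hneg (ENNReal.le_tsum j),
    ← (ENNReal.summable_toReal hpos).tsum_sub (ENNReal.summable_toReal hneg), ← hsum]
  exact tsum_congr fun j => (integral_eq_lintegral_pos_part_sub_lintegral_neg_part (hint j)).symm

section ManyToOne

variable {P : Measure Ω} {L : List ℕ → Ω → ℕ → EReal}

def expMoment (L : List ℕ → Ω → ℕ → EReal) (P : Measure Ω) (u : List ℕ) : ℝ≥0∞ :=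
  ∫⁻ ω, ENNReal.ofReal (expR (pos L u ω)) ∂P

def sqExpMoment (L : List ℕ → Ω → ℕ → EReal) (P : Measure Ω) (u : List ℕ) : ℝ≥0∞ :=
  ∫⁻ ω, ENNReal.ofReal (x2expR (pos L u ω)) ∂P

namespace IsBRW

lemma aemeasurable (hL : IsBRW L P) (u : List ℕ) : AEMeasurable (L u) P :=
  (hL.ident u).aemeasurable_fst

/-- `V(u)` only involves the point processes of the strict ancestors of `u`. -/
lemma indepFun_pos (hL : IsBRW L P) (u : List ℕ) : IndepFun (pos L u) (L u) P := by
  set S := (Finset.range u.length).image u.take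
  have hdisj : Disjoint S {u} := by
    simp only [S, Finset.disjoint_singleton_right, Finset.mem_image, Finset.mem_range]
    rintro ⟨i, hi, hEq⟩
    have := congrArg List.length hEq
    simp only [List.length_take] at this
    omega
  have hmem : ∀ i ∈ Finset.range u.length, u.take i ∈ S := fun i hi =>
    Finset.mem_image_of_mem _ hi
  let φ : (S → ℕ → EReal) → EReal := fun F =>
    ∑ i ∈ (Finset.range u.length).attach, F ⟨u.take i, hmem i i.2⟩ (u.getD i 0)
  let ψ : (({u} : Finset (List ℕ)) → ℕ → EReal) → ℕ → EReal := fun F =>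
    F ⟨u, Finset.mem_singleton_self u⟩
  have hφ : Measurable φ := Finset.measurable_sum _ fun _ _ => by fun_prop
  have hψ : Measurable ψ := measurable_pi_apply _
  have hpos : pos L u = φ ∘ fun ω (v : S) => L v ω := by
    funext ω
    exact (Finset.sum_attach (Finset.range u.length) fun i => L (u.take i) ω (u.getD i 0)).symm
  rw [hpos]
  exact (hL.indep.indepFun_finset₀ S {u} hdisj hL.aemeasurable).comp hφ hψ

lemma tsum_lintegral_mul_children (hL : IsBRW L P) (u : List ℕ) {f g : EReal → ℝ≥0∞}
    (hf : Measurable f) (hg : Measurable g) :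
    ∑' j, ∫⁻ ω, f (pos L u ω) * g (L u ω j) ∂P
      = (∫⁻ ω, f (pos L u ω) ∂P) * ∫⁻ ω, ∑' j, g (L [] ω j) ∂P := by
  have hG : Measurable fun v : ℕ → EReal => ∑' j, g (v j) := by fun_prop
  have hfpos : AEMeasurable (fun ω => f (pos L u ω)) P :=
    hf.comp_aemeasurable (aemeasurable_pos hL.aemeasurable u)
  rw [← lintegral_tsum (f := fun j ω => f (pos L u ω) * g (L u ω j)) fun j => hfpos.mul
      (hg.comp_aemeasurable ((measurable_pi_apply j).comp_aemeasurable (hL.aemeasurable u)))]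
  simp_rw [ENNReal.tsum_mul_left]
  rw [lintegral_mul_eq_lintegral_mul_lintegral_of_indepFun''
    (g := fun ω => ∑' j, g (L u ω j)) hfpos (hG.comp_aemeasurable (hL.aemeasurable u))
    ((hL.indepFun_pos u).comp hf hG)]
  exact congrArg _ ((hL.ident u).comp hG).lintegral_eq

lemma lintegral_tsum_enorm_xexpR_le (hL : IsBRW L P) (h2 : A2 L P) :
    ∫⁻ ω, ∑' j, ‖xexpR (L [] ω j)‖ₑ ∂P ≤ sigma2Int L P + 1 := by
  calc ∫⁻ ω, ∑' j, ‖xexpR (L [] ω j)‖ₑ ∂P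
      ≤ ∫⁻ ω, (∑' j, ENNReal.ofReal (x2expR (L [] ω j))
          + ∑' j, ENNReal.ofReal (expR (L [] ω j))) ∂P := by
        refine lintegral_mono fun ω => ?_
        rw [← ENNReal.tsum_add]
        exact ENNReal.tsum_le_tsum fun j => enorm_xexpR_le _
    _ = sigma2Int L P + 1 := by
        have hm : Measurable fun v : ℕ → EReal => ∑' j, ENNReal.ofReal (x2expR (v j)) := by
          fun_prop
        rw [lintegral_add_left' (f := fun ω => ∑' j, ENNReal.ofReal (x2expR (L [] ω j)))
          (hm.comp_aemeasurable (hL.aemeasurable [])), h2.1, sigma2Int]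

lemma lintegral_enorm_xexpR_pos_le (hL : IsBRW L P) (u : List ℕ) :
    ∫⁻ ω, ‖xexpR (pos L u ω)‖ₑ ∂P ≤ sqExpMoment L P u + expMoment L P u :=
  (lintegral_mono fun ω => enorm_xexpR_le _).trans_eq <|
    lintegral_add_left' ((by fun_prop : Measurable fun x => ENNReal.ofReal (x2expR x))
      |>.comp_aemeasurable (aemeasurable_pos hL.aemeasurable u)) _


lemma tsum_lintegral_enorm_cross_ne_top (hL : IsBRW L P) (h2 : A2 L P) (h3 : A3 L P)
    {u : List ℕ} (hW : expMoment L P u ≠ ⊤) (hQ : sqExpMoment L P u ≠ ⊤) :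
    ∑' j, ∫⁻ ω, ‖xexpR (pos L u ω) * xexpR (L u ω j)‖ₑ ∂P ≠ ⊤ := by
  simp_rw [enorm_mul]
  rw [hL.tsum_lintegral_mul_children u (f := fun x => ‖xexpR x‖ₑ) (g := fun x => ‖xexpR x‖ₑ)
    (by fun_prop) (by fun_prop)]
  exact ENNReal.mul_ne_top
    (ne_top_of_le_ne_top (ENNReal.add_ne_top.2 ⟨hQ, hW⟩) (hL.lintegral_enorm_xexpR_pos_le u))
    (ne_top_of_le_ne_top (ENNReal.add_ne_top.2 ⟨h3.ne, ENNReal.one_ne_top⟩)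
      (hL.lintegral_tsum_enorm_xexpR_le h2))

lemma tsum_integral_cross_eq_zero (hL : IsBRW L P) (h2 : A2 L P) (h3 : A3 L P) (u : List ℕ) :
    ∑' j, ∫ ω, xexpR (pos L u ω) * xexpR (L u ω j) ∂P = 0 := by
  have hΦ : AEStronglyMeasurable (fun ω => xexpR (pos L u ω)) P :=
    (measurable_xexpR.comp_aemeasurable (aemeasurable_pos hL.aemeasurable u)).aestronglyMeasurable
  have hΨ : ∀ v j, AEStronglyMeasurable (fun ω => xexpR (L v ω j)) P := fun v j =>
    ((by fun_prop : Measurable fun w : ℕ → EReal => xexpR (w j)).comp_aemeasurable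
      (hL.aemeasurable v)).aestronglyMeasurable
  have hfin : ∑' j, ∫⁻ ω, ‖xexpR (L [] ω j)‖ₑ ∂P ≠ ⊤ := by
    rw [← lintegral_tsum fun j => (hΨ [] j).enorm]
    exact ne_top_of_le_ne_top (ENNReal.add_ne_top.2 ⟨h3.ne, ENNReal.one_ne_top⟩)
      (hL.lintegral_tsum_enorm_xexpR_le h2)
  calc ∑' j, ∫ ω, xexpR (pos L u ω) * xexpR (L u ω j) ∂P
      = ∑' j, (∫ ω, xexpR (pos L u ω) ∂P) * ∫ ω, xexpR (L [] ω j) ∂P := by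
        refine tsum_congr fun j => ?_
        have hj : Measurable fun v : ℕ → EReal => xexpR (v j) := by fun_prop
        exact (((hL.indepFun_pos u).comp measurable_xexpR hj).integral_mul_eq_mul_integral
          hΦ (hΨ u j)).trans (congrArg _ ((hL.ident u).comp hj).integral_eq)
    _ = 0 := by rw [tsum_mul_left, ← integral_tsum (hΨ []) hfin, h2.2, mul_zero]

lemma tsum_expMoment_append (hL : IsBRW L P) (h2 : A2 L P) (u : List ℕ) :
    ∑' j, expMoment L P (u ++ [j]) = expMoment L P u := by
  have hsplit : ∀ j ω, ENNReal.ofReal (expR (pos L (u ++ [j]) ω))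
      = ENNReal.ofReal (expR (pos L u ω)) * ENNReal.ofReal (expR (L u ω j)) := fun j ω => by
    rw [pos_append, expR_add (pos_ne_top hL.ne_top u ω) (hL.ne_top u ω j),
      ENNReal.ofReal_mul (expR_nonneg _)]
  simp_rw [expMoment, hsplit]
  rw [hL.tsum_lintegral_mul_children u (f := fun x => ENNReal.ofReal (expR x))
    (g := fun x => ENNReal.ofReal (expR x)) (by fun_prop) (by fun_prop), h2.1, mul_one]

lemma aemeasurable_pos_prodMk (hL : IsBRW L P) (u : List ℕ) (j : ℕ) :
    AEMeasurable (fun ω => (pos L u ω, L u ω j)) P :=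
  (aemeasurable_pos hL.aemeasurable u).prodMk
    ((measurable_pi_apply j).comp_aemeasurable (hL.aemeasurable u))

lemma tsum_lintegral_ofReal_cross_eq (hL : IsBRW L P) (h2 : A2 L P) (h3 : A3 L P)
    {u : List ℕ} (hW : expMoment L P u ≠ ⊤) (hQ : sqExpMoment L P u ≠ ⊤) :
    ∑' j, ∫⁻ ω, ENNReal.ofReal (xexpR (pos L u ω) * xexpR (L u ω j)) ∂P
      = ∑' j, ∫⁻ ω, ENNReal.ofReal (-(xexpR (pos L u ω) * xexpR (L u ω j))) ∂P :=
  tsum_lintegral_ofReal_eq_tsum_lintegral_ofReal_neg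
    (fun j => ((by fun_prop : Measurable fun p : EReal × EReal => xexpR p.1 * xexpR p.2)
      |>.comp_aemeasurable' (hL.aemeasurable_pos_prodMk u j)).aestronglyMeasurable)
    (hL.tsum_lintegral_enorm_cross_ne_top h2 h3 hW hQ) (hL.tsum_integral_cross_eq_zero h2 h3 u)

lemma sqExpMoment_append_add_cross (hL : IsBRW L P) (u : List ℕ) (j : ℕ) :
    sqExpMoment L P (u ++ [j])
        + 2 * ∫⁻ ω, ENNReal.ofReal (-(xexpR (pos L u ω) * xexpR (L u ω j))) ∂P
      = ∫⁻ ω, ENNReal.ofReal (x2expR (pos L u ω)) * ENNReal.ofReal (expR (L u ω j)) ∂P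
        + ∫⁻ ω, ENNReal.ofReal (expR (pos L u ω)) * ENNReal.ofReal (x2expR (L u ω j)) ∂P
        + 2 * ∫⁻ ω, ENNReal.ofReal (xexpR (pos L u ω) * xexpR (L u ω j)) ∂P := by
  have hpair := hL.aemeasurable_pos_prodMk u j
  simp only [sqExpMoment, pos_append, ← lintegral_const_mul' _ _ ENNReal.ofNat_ne_top]
  rw [← lintegral_add_left' ((by fun_prop : Measurable fun p : EReal × EReal =>
      ENNReal.ofReal (x2expR (p.1 + p.2))).comp_aemeasurable' hpair),
    ← lintegral_add_left' ((by fun_prop : Measurable fun p : EReal × EReal =>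
      ENNReal.ofReal (x2expR p.1) * ENNReal.ofReal (expR p.2)).comp_aemeasurable' hpair),
    ← lintegral_add_left' ((by fun_prop : Measurable fun p : EReal × EReal =>
      ENNReal.ofReal (x2expR p.1) * ENNReal.ofReal (expR p.2)
        + ENNReal.ofReal (expR p.1) * ENNReal.ofReal (x2expR p.2)).comp_aemeasurable' hpair)]
  exact lintegral_congr fun ω => ofReal_x2expR_add (pos_ne_top hL.ne_top u ω) (hL.ne_top u ω j)

lemma tsum_sqExpMoment_append (hL : IsBRW L P) (h2 : A2 L P) (h3 : A3 L P) {u : List ℕ}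
    (hW : expMoment L P u ≠ ⊤) (hQ : sqExpMoment L P u ≠ ⊤) :
    ∑' j, sqExpMoment L P (u ++ [j]) = sqExpMoment L P u + expMoment L P u * sigma2Int L P := by
  set r : ℕ → ℝ≥0∞ := fun j => ∫⁻ ω, ENNReal.ofReal (xexpR (pos L u ω) * xexpR (L u ω j)) ∂P
  set s : ℕ → ℝ≥0∞ := fun j => ∫⁻ ω, ENNReal.ofReal (-(xexpR (pos L u ω) * xexpR (L u ω j))) ∂P
  have hs : 2 * ∑' j, s j ≠ ⊤ := ENNReal.mul_ne_top ENNReal.ofNat_ne_top <|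
    ne_top_of_le_ne_top (hL.tsum_lintegral_enorm_cross_ne_top h2 h3 hW hQ) <|
      ENNReal.tsum_le_tsum fun j =>
        lintegral_mono fun ω => (Real.ofReal_le_enorm _).trans_eq (enorm_neg _)
  refine (ENNReal.add_left_inj hs).1 ?_
  calc ∑' j, sqExpMoment L P (u ++ [j]) + 2 * ∑' j, s j
      = ∑' j, (sqExpMoment L P (u ++ [j]) + 2 * s j) := by
        rw [ENNReal.tsum_add, ENNReal.tsum_mul_left]
    _ = ∑' j, (∫⁻ ω, ENNReal.ofReal (x2expR (pos L u ω)) * ENNReal.ofReal (expR (L u ω j)) ∂P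
        + ∫⁻ ω, ENNReal.ofReal (expR (pos L u ω)) * ENNReal.ofReal (x2expR (L u ω j)) ∂P
        + 2 * r j) := tsum_congr (hL.sqExpMoment_append_add_cross u)
    _ = sqExpMoment L P u + expMoment L P u * sigma2Int L P + 2 * ∑' j, s j := by
        rw [ENNReal.tsum_add, ENNReal.tsum_add, ENNReal.tsum_mul_left,
          hL.tsum_lintegral_ofReal_cross_eq h2 h3 hW hQ,
          hL.tsum_lintegral_mul_children u (f := fun x => ENNReal.ofReal (x2expR x))
            (g := fun x => ENNReal.ofReal (expR x)) (by fun_prop) (by fun_prop),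
          hL.tsum_lintegral_mul_children u (f := fun x => ENNReal.ofReal (expR x))
            (g := fun x => ENNReal.ofReal (x2expR x)) (by fun_prop) (by fun_prop), h2.1, mul_one]
        rfl

lemma tsum_expMoment_generation (hL : IsBRW L P) (h2 : A2 L P) [IsProbabilityMeasure P] (n : ℕ) :
    ∑' u : {u : List ℕ // u.length = n}, expMoment L P u = 1 := by
  induction n with
  | zero => rw [tsum_length_zero (expMoment L P)]; simp [expMoment, expR]
  | succ n ih =>
    rw [tsum_length_succ]
    simp_rw [hL.tsum_expMoment_append h2]
    exact ih

lemma tsum_sqExpMoment_generation (hL : IsBRW L P) (h2 : A2 L P) (h3 : A3 L P)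
    [IsProbabilityMeasure P] (n : ℕ) :
    ∑' u : {u : List ℕ // u.length = n}, sqExpMoment L P u = n * sigma2Int L P := by
  induction n with
  | zero => rw [tsum_length_zero (sqExpMoment L P)]; simp [sqExpMoment, x2expR]
  | succ n ih =>
    have hW : ∀ u : {u : List ℕ // u.length = n}, expMoment L P u ≠ ⊤ := fun u =>
      ne_top_of_le_ne_top ENNReal.one_ne_top
        ((hL.tsum_expMoment_generation h2 n).symm ▸ ENNReal.le_tsum u)
    have hQ : ∀ u : {u : List ℕ // u.length = n}, sqExpMoment L P u ≠ ⊤ := fun u =>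
      ne_top_of_le_ne_top (ENNReal.mul_ne_top (ENNReal.natCast_ne_top n) h3.ne)
        (ih ▸ ENNReal.le_tsum u)
    rw [tsum_length_succ]
    simp_rw [fun u : {u : List ℕ // u.length = n} => hL.tsum_sqExpMoment_append h2 h3 (hW u) (hQ u)]
    rw [ENNReal.tsum_add, ih, ENNReal.tsum_mul_right, hL.tsum_expMoment_generation h2 n]
    push_cast
    ring

end IsBRW

end ManyToOne

section Tail

lemma lintegral_Ioo_mul_exp_le {c : ℝ} (hc : 0 ≤ c) (t : ℝ) :
    ENNReal.ofReal c * ∫⁻ y in Ioo c t, ENNReal.ofReal (y * Real.exp y)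
      ≤ ENNReal.ofReal (t ^ 2 * Real.exp t) := by
  rw [← lintegral_const_mul' _ _ ENNReal.ofReal_ne_top]
  calc ∫⁻ y in Ioo c t, ENNReal.ofReal c * ENNReal.ofReal (y * Real.exp y)
      ≤ ∫⁻ y in Ioo c t, ENNReal.ofReal (t ^ 2) * ENNReal.ofReal (Real.exp y) := by
        refine setLIntegral_mono' measurableSet_Ioo fun y ⟨hcy, hyt⟩ => ?_
        rw [← ENNReal.ofReal_mul hc, ← ENNReal.ofReal_mul (sq_nonneg t)]
        refine ENNReal.ofReal_le_ofReal ?_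
        -- `c y ≤ y² ≤ t²` on `(c, t)`
        have hy : 0 ≤ y := hc.trans hcy.le
        have hcyy : c * y ≤ t ^ 2 := by nlinarith
        nlinarith [Real.exp_pos y]
    _ ≤ ∫⁻ y in Iic t, ENNReal.ofReal (t ^ 2) * ENNReal.ofReal (Real.exp y) :=
        lintegral_mono_set (Ioo_subset_Iio_self.trans Iio_subset_Iic_self)
    _ = ENNReal.ofReal (t ^ 2 * Real.exp t) := by
        rw [lintegral_const_mul _ (by fun_prop), ← ofReal_integral_eq_lintegral_ofReal
          (integrableOn_exp_Iic t) (Eventually.of_forall fun y => (Real.exp_pos y).le),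
          integral_exp_Iic, ENNReal.ofReal_mul (sq_nonneg t)]

lemma lintegral_Ioi_mul_exp_ite_le {c : ℝ} (hc : 0 ≤ c) {x : EReal} (hx : x ≠ ⊤) :
    ENNReal.ofReal c
        * ∫⁻ y in Ioi c, (if (y : EReal) < x then ENNReal.ofReal (y * Real.exp y) else 0)
      ≤ ENNReal.ofReal (x2expR x) := by
  induction x using EReal.rec with
  | bot => simp
  | top => exact absurd rfl hx
  | coe t =>
    have hIoo : ∫⁻ y in Ioi c, (if (y : EReal) < t then ENNReal.ofReal (y * Real.exp y) else 0)
        = ∫⁻ y in Ioo c t, ENNReal.ofReal (y * Real.exp y) := by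
      have hind : ∀ y : ℝ, (if (y : EReal) < t then ENNReal.ofReal (y * Real.exp y) else 0)
          = (Iio t).indicator (fun y => ENNReal.ofReal (y * Real.exp y)) y := fun y => by
        simp [indicator_apply]
      simp_rw [hind]
      rw [lintegral_indicator measurableSet_Iio, Measure.restrict_restrict measurableSet_Iio,
        Iio_inter_Ioi]
    rw [hIoo, x2expR_coe]
    exact lintegral_Ioo_mul_exp_le hc t

variable {P : Measure Ω}

lemma mul_lintegral_Ioi_mul_exp_measure_lt_le [SFinite P] {X : Ω → EReal}
    (hX : AEMeasurable X P) (htop : ∀ ω, X ω ≠ ⊤) {c : ℝ} (hc : 0 ≤ c) :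
    ENNReal.ofReal c * ∫⁻ y in Ioi c, ENNReal.ofReal (y * Real.exp y) * P {ω | (y : EReal) < X ω}
      ≤ ∫⁻ ω, ENNReal.ofReal (x2expR (X ω)) ∂P := by
  obtain ⟨X', hX', hXX'⟩ := hX
  have hmeasure : ∀ y : ℝ, P {ω | (y : EReal) < X ω} = P {ω | (y : EReal) < X' ω} := fun y => by
    refine measure_congr ?_
    filter_upwards [hXX'] with ω hω
    change ((y : EReal) < X ω) = ((y : EReal) < X' ω)
    rw [hω]
  have hswap : ∫⁻ y in Ioi c, ENNReal.ofReal (y * Real.exp y) * P {ω | (y : EReal) < X' ω}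
      = ∫⁻ ω, (∫⁻ y in Ioi c,
          (if (y : EReal) < X' ω then ENNReal.ofReal (y * Real.exp y) else 0)) ∂P := by
    rw [← lintegral_lintegral_swap ?_]
    · refine lintegral_congr fun y => ?_
      rw [← lintegral_indicator_const (measurableSet_lt measurable_const hX')]
      simp only [indicator_apply, mem_ofPred_eq]
    · refine (Measurable.ite ?_ (by fun_prop) measurable_const).aemeasurable
      exact measurableSet_lt (by fun_prop) (hX'.comp measurable_snd)
  calc ENNReal.ofReal c
        * ∫⁻ y in Ioi c, ENNReal.ofReal (y * Real.exp y) * P {ω | (y : EReal) < X ω}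
      = ∫⁻ ω, ENNReal.ofReal c * (∫⁻ y in Ioi c,
          (if (y : EReal) < X' ω then ENNReal.ofReal (y * Real.exp y) else 0)) ∂P := by
        simp_rw [hmeasure, hswap, lintegral_const_mul' _ _ ENNReal.ofReal_ne_top]
    _ ≤ ∫⁻ ω, ENNReal.ofReal (x2expR (X' ω)) ∂P := by
        refine lintegral_mono_ae ?_
        filter_upwards [hXX'] with ω hω
        exact lintegral_Ioi_mul_exp_ite_le hc (hω ▸ htop ω)
    _ = ∫⁻ ω, ENNReal.ofReal (x2expR (X ω)) ∂P := by
        refine lintegral_congr_ae ?_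
        filter_upwards [hXX'] with ω hω
        rw [hω]

variable {L : List ℕ → Ω → ℕ → EReal}

lemma IsBRW.mul_lintegral_Ioi_mul_exp_measure_lt_maxPos_le (hL : IsBRW L P) (h2 : A2 L P)
    (h3 : A3 L P) [IsProbabilityMeasure P] (ℓ : ℕ) {c : ℝ} (hc : 0 ≤ c) :
    ENNReal.ofReal c
        * ∫⁻ y in Ioi c, ENNReal.ofReal (y * Real.exp y) * P {ω | (y : EReal) < maxPos L ℓ ω}
      ≤ ℓ * sigma2Int L P := by
  have hunion : ∀ y : ℝ, P {ω | (y : EReal) < maxPos L ℓ ω}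
      ≤ ∑' u : {u : List ℕ // u.length = ℓ}, P {ω | (y : EReal) < pos L u ω} := fun y =>
    (measure_mono fun ω (hω : (y : EReal) < ⨆ u : {u : List ℕ // u.length = ℓ}, pos L u ω) =>
      mem_iUnion.2 (lt_iSup_iff.1 hω)).trans
      (measure_iUnion_le fun u : {u : List ℕ // u.length = ℓ} => {ω | (y : EReal) < pos L u ω})
  have hmeas : ∀ u : List ℕ, Measurable fun y : ℝ =>
      ENNReal.ofReal (y * Real.exp y) * P {ω | (y : EReal) < pos L u ω} := fun u =>
    (by fun_prop : Measurable fun y : ℝ => ENNReal.ofReal (y * Real.exp y)).mul <|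
      Antitone.measurable fun y₁ y₂ h =>
        measure_mono fun ω hω => (EReal.coe_le_coe_iff.2 h).trans_lt hω
  calc ENNReal.ofReal c
        * ∫⁻ y in Ioi c, ENNReal.ofReal (y * Real.exp y) * P {ω | (y : EReal) < maxPos L ℓ ω}
      ≤ ENNReal.ofReal c * ∫⁻ y in Ioi c, ∑' u : {u : List ℕ // u.length = ℓ},
          ENNReal.ofReal (y * Real.exp y) * P {ω | (y : EReal) < pos L u ω} := by
        gcongr with y
        rw [ENNReal.tsum_mul_left]
        exact mul_le_mul_right (hunion y) _
    _ = ∑' u : {u : List ℕ // u.length = ℓ}, ENNReal.ofReal c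
          * ∫⁻ y in Ioi c, ENNReal.ofReal (y * Real.exp y) * P {ω | (y : EReal) < pos L u ω} := by
        rw [lintegral_tsum fun u : {u : List ℕ // u.length = ℓ} => (hmeas u).aemeasurable,
          ENNReal.tsum_mul_left]
    _ ≤ ∑' u : {u : List ℕ // u.length = ℓ}, sqExpMoment L P u :=
        ENNReal.tsum_le_tsum fun u => mul_lintegral_Ioi_mul_exp_measure_lt_le
          (aemeasurable_pos hL.aemeasurable u) (pos_ne_top hL.ne_top u) hc
    _ = ℓ * sigma2Int L P := hL.tsum_sqExpMoment_generation h2 h3 ℓ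

end Tail

lemma le_ofReal_toReal_div_of_mul_le {I s : ℝ≥0∞} {B : ℝ} {ℓ : ℕ} (hB : 0 < B)
    (hℓ : 1 ≤ ℓ) (hs : s ≠ ⊤) (h : ENNReal.ofReal (B * ℓ) * I ≤ ℓ * s) :
    I ≤ ENNReal.ofReal (s.toReal / B) := by
  have hℓ0 : (ℓ : ℝ≥0∞) ≠ 0 := by exact_mod_cast (Nat.one_le_iff_ne_zero.1 hℓ)
  rw [ENNReal.ofReal_mul hB.le, ENNReal.ofReal_natCast, mul_comm (ENNReal.ofReal B), mul_assoc,
    ENNReal.mul_le_mul_iff_right hℓ0 (ENNReal.natCast_ne_top ℓ)] at h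
  rw [ENNReal.ofReal_div_of_pos hB, ENNReal.ofReal_toReal hs,
    ENNReal.le_div_iff_mul_le (Or.inl (ENNReal.ofReal_pos.2 hB).ne') (Or.inl ENNReal.ofReal_ne_top),
    mul_comm]
  exact h

theorem restriction_upper_general {Ω : Type*} [MeasurableSpace Ω] (P : Measure Ω) [IsProbabilityMeasure P]
    (L : List ℕ → Ω → ℕ → EReal)
    (hBRW : IsBRW L P) (h2 : A2 L P) (h3 : A3 L P) :
    (∀ B : ℝ, 0 < B →
      (⨆ ℓ : ℕ, ⨆ _ : 1 ≤ ℓ,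
          ∫⁻ y in Set.Ioi (B * (ℓ : ℝ)),
            ENNReal.ofReal (y * Real.exp y) * P {ω | (y : EReal) < maxPos L ℓ ω})
        ≤ ENNReal.ofReal (sigma2 L P / B)) ∧
    Tendsto (fun B : ℝ =>
        ⨆ ℓ : ℕ, ⨆ _ : 1 ≤ ℓ,
          ∫⁻ y in Set.Ioi (B * (ℓ : ℝ)),
            ENNReal.ofReal (y * Real.exp y) * P {ω | (y : EReal) < maxPos L ℓ ω})
      atTop (𝓝 0) := by
  have hbound : ∀ B : ℝ, 0 < B →
      (⨆ ℓ : ℕ, ⨆ _ : 1 ≤ ℓ,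
          ∫⁻ y in Set.Ioi (B * (ℓ : ℝ)),
            ENNReal.ofReal (y * Real.exp y) * P {ω | (y : EReal) < maxPos L ℓ ω})
        ≤ ENNReal.ofReal (sigma2 L P / B) := fun B hB =>
    iSup₂_le fun ℓ hℓ => le_ofReal_toReal_div_of_mul_le hB hℓ h3.ne
      (hBRW.mul_lintegral_Ioi_mul_exp_measure_lt_maxPos_le h2 h3 ℓ (by positivity))
  refine ⟨hbound, ?_⟩
  have hlim : Tendsto (fun B : ℝ => ENNReal.ofReal (sigma2 L P / B)) atTop (𝓝 0) := by
    simpa using ENNReal.tendsto_ofReal (tendsto_const_nhds.div_atTop tendsto_id)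
  exact tendsto_of_tendsto_of_tendsto_of_le_of_le' tendsto_const_nhds hlim
    (Eventually.of_forall fun _ => zero_le) ((eventually_gt_atTop 0).mono hbound)

/-- Proposition 3.2.
Under (A1)–(A3), `lim_{B→∞} sup_{ℓ≥1} ∫_{Bℓ}^∞ y e^y P(M_ℓ > y) dy = 0`; in fact for every
`B > 0` the supremum is at most `σ²/B`. -/
theorem restriction_upper {Ω : Type*} [MeasurableSpace Ω] (P : Measure Ω) [IsProbabilityMeasure P]
    (L : List ℕ → Ω → ℕ → EReal)
    (hBRW : IsBRW L P) (h1 : A1 L P) (h2 : A2 L P) (h3 : A3 L P) :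
    (∀ B : ℝ, 0 < B →
      (⨆ ℓ : ℕ, ⨆ _ : 1 ≤ ℓ,
          ∫⁻ y in Set.Ioi (B * (ℓ : ℝ)),
            ENNReal.ofReal (y * Real.exp y) * P {ω | (y : EReal) < maxPos L ℓ ω})
        ≤ ENNReal.ofReal (sigma2 L P / B)) ∧
    Tendsto (fun B : ℝ =>
        ⨆ ℓ : ℕ, ⨆ _ : 1 ≤ ℓ,
          ∫⁻ y in Set.Ioi (B * (ℓ : ℝ)),
            ENNReal.ofReal (y * Real.exp y) * P {ω | (y : EReal) < maxPos L ℓ ω})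
      atTop (𝓝 0) :=
  restriction_upper_general P L hBRW h2 h3

end BRW
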